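/- Let C be a local three-dimensional regular ring with maximal ideal (x,y,z) and let R = C/(xy − z^n), n ≥ 1. In the forcing algebra A = R[T_1,T_2]/(z^{n−1}(xy)^k + T_1x^{k+1} + T_2y^{k+1}) one has the identity T_1^n·x^{n(k+1)+1} = y^{n(k+1)−1}·(x^{k+1} + T_2z)^n (up to sign conventions matching the forcing equation), so that in the localization A_x the element T_1^n/y^{n(k+1)−1} equals (x^{k+1}+T_2z)^n/x^{n(k+1)+1} wherever both are defined. -/

import Mathlib

open MvPolynomial

/-- The hypersurface ring `R = C/(xy - z^n)`. -/
abbrev Hyp19 {S : Type*} [CommRing S] (x y z : S) (n : ℕ) :=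
  S ⧸ Ideal.span ({x * y - z ^ n} : Set S)

/-- The forcing ideal `(z^{n-1}(xy)^k - x^{k+1}·T₁ - y^{k+1}·T₂)` over `R = C/(xy - z^n)`,
i.e. the relation `z^{n-1}(xy)^k = T₁x^{k+1} + T₂y^{k+1}` (the paper's sign convention for
the forcing equation). -/
noncomputable def forcingIdeal19 {S : Type*} [CommRing S] (x y z : S) (n k : ℕ) :
    Ideal (MvPolynomial (Fin 2) (Hyp19 x y z n)) :=
  Ideal.span
    {C (Ideal.Quotient.mk _ (z ^ (n - 1) * (x * y) ^ k)) -
      C (Ideal.Quotient.mk _ (x ^ (k + 1))) * X 0 -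
      C (Ideal.Quotient.mk _ (y ^ (k + 1))) * X 1}

/-- The forcing algebra `A = R[T₁,T₂]` modulo the forcing equation
`z^{n-1}(xy)^k = T₁x^{k+1} + T₂y^{k+1}` over `R = C/(xy - z^n)`. -/
abbrev ForcingAlgebra19 {S : Type*} [CommRing S] (x y z : S) (n k : ℕ) :=
  MvPolynomial (Fin 2) (Hyp19 x y z n) ⧸ forcingIdeal19 x y z n k

set_option maxHeartbeats 1000000 in
set_option synthInstance.maxHeartbeats 400000 in
/-- Let `C` be a local three-dimensional regular ring with maximal ideal `(x,y,z)` and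
`R = C/(xy - z^n)`, `n ≥ 1`. In the forcing algebra `A` for the equation
`z^{n-1}(xy)^k = T₁x^{k+1} + T₂y^{k+1}` one has the identity
`T₁^n·x^{n(k+1)+1} = y^{n(k+1)-1}·(x^{k+1} - T₂z)^n`, so that in the localization `A_x`
the element `T₁^n` equals the fraction `y^{n(k+1)-1}(x^{k+1} - T₂z)^n / x^{n(k+1)+1}`. -/
theorem forcing_algebra_identity {S : Type*} [CommRing S] [IsNoetherianRing S] [IsLocalRing S]
    (x y z : S) (hdim : ringKrullDim S = 3)
    (hmax : IsLocalRing.maximalIdeal S = Ideal.span {x, y, z}) (n k : ℕ) (hn : 1 ≤ n) :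
    ∀ (xa ya za t₁ t₂ : ForcingAlgebra19 x y z n k),
      xa = algebraMap (Hyp19 x y z n) _ (Ideal.Quotient.mk _ x) →
      ya = algebraMap (Hyp19 x y z n) _ (Ideal.Quotient.mk _ y) →
      za = algebraMap (Hyp19 x y z n) _ (Ideal.Quotient.mk _ z) →
      t₁ = Ideal.Quotient.mk (forcingIdeal19 x y z n k) (X 0) →
      t₂ = Ideal.Quotient.mk (forcingIdeal19 x y z n k) (X 1) →
      t₁ ^ n * xa ^ (n * (k + 1) + 1) =
          ya ^ (n * (k + 1) - 1) * (xa ^ (k + 1) - t₂ * za) ^ n ∧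
        @algebraMap (ForcingAlgebra19 x y z n k) (Localization.Away xa) inferInstance _ _ (t₁ ^ n) =
          IsLocalization.mk' (Localization.Away xa)
            (ya ^ (n * (k + 1) - 1) * (xa ^ (k + 1) - t₂ * za) ^ n)
            (⟨xa ^ (n * (k + 1) + 1), pow_mem (Submonoid.mem_powers xa) _⟩ : Submonoid.powers xa) := by
  intro xa ya za t₁ t₂ hx hy hz ht1 ht2
  obtain ⟨m, rfl⟩ : ∃ m, n = m + 1 := ⟨n - 1, by omega⟩
  have halg : ∀ r : Hyp19 x y z (m + 1),
      algebraMap (Hyp19 x y z (m + 1)) (ForcingAlgebra19 x y z (m + 1) k) r =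
        Ideal.Quotient.mk (forcingIdeal19 x y z (m + 1) k) (C r) := fun r => rfl
  -- relation z^(m+1) = x*y in A
  have hzn : za ^ (m + 1) = xa * ya := by
    subst hx hy hz
    rw [← map_pow, ← map_pow, ← map_mul, ← map_mul]
    congr 1
    exact Ideal.Quotient.eq.mpr (by
      simpa using (Ideal.span ({x * y - z ^ (m + 1)} : Set S)).neg_mem
        (Ideal.mem_span_singleton_self (x * y - z ^ (m + 1))))
  have hz' : za ^ m * za = xa * ya := by rw [← pow_succ]; exact hzn
  -- forcing relation
  have hforce : za ^ m * (xa * ya) ^ k = xa ^ (k + 1) * t₁ + ya ^ (k + 1) * t₂ := by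
    subst hx hy hz ht1 ht2
    have h0 : Ideal.Quotient.mk (forcingIdeal19 x y z (m + 1) k)
        (C (Ideal.Quotient.mk _ (z ^ (m + 1 - 1) * (x * y) ^ k)) -
          C (Ideal.Quotient.mk _ (x ^ (k + 1))) * X 0 -
          C (Ideal.Quotient.mk _ (y ^ (k + 1))) * X 1) = 0 :=
      Ideal.Quotient.eq_zero_iff_mem.mpr (Ideal.mem_span_singleton_self _)
    rw [show m + 1 - 1 = m from rfl] at h0
    simp only [map_sub, map_mul, map_pow] at h0
    simp only [halg, map_mul, map_pow]
    linear_combination h0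
  -- key elements
  set E : ForcingAlgebra19 x y z (m + 1) k := za ^ m * xa ^ k - t₂ * ya with hE
  set D : ForcingAlgebra19 x y z (m + 1) k := xa ^ (k + 1) - t₂ * za with hD
  have hB : t₁ * xa ^ (k + 1) = ya ^ k * E := by
    rw [hE]; linear_combination -hforce
  have hxE : xa * E = za ^ m * D := by
    rw [hE, hD]; linear_combination t₂ * hz'
  have hzE : za * E = ya * D := by
    rw [hE, hD]; linear_combination xa ^ k * hz'
  -- main computation : xa * E ^ (m+1) = ya ^ m * D ^ (m+1)
  have hmain : xa * E ^ (m + 1) = ya ^ m * D ^ (m + 1) :=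
    calc xa * E ^ (m + 1) = (xa * E) * E ^ m := by ring
      _ = (za ^ m * D) * E ^ m := by rw [hxE]
      _ = D * (za * E) ^ m := by ring
      _ = D * (ya * D) ^ m := by rw [hzE]
      _ = ya ^ m * D ^ (m + 1) := by ring
  -- exponent bookkeeping
  have e1 : (m + 1) * (k + 1) + 1 = (k + 1) * (m + 1) + 1 := by ring
  have e2 : (m + 1) * (k + 1) - 1 = k * (m + 1) + m := by
    rw [show (m + 1) * (k + 1) = (k * (m + 1) + m) + 1 from by ring, Nat.succ_sub_one]
  have h3 : xa ^ ((m + 1) * (k + 1) + 1) = (xa ^ (k + 1)) ^ (m + 1) * xa :=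
    (congrArg (xa ^ ·) e1).trans (by rw [pow_succ, pow_mul])
  have h4 : ya ^ ((m + 1) * (k + 1) - 1) = (ya ^ k) ^ (m + 1) * ya ^ m :=
    (congrArg (ya ^ ·) e2).trans (by rw [pow_add, pow_mul])
  have key : t₁ ^ (m + 1) * xa ^ ((m + 1) * (k + 1) + 1) =
      ya ^ ((m + 1) * (k + 1) - 1) * D ^ (m + 1) := by
    rw [h3, h4]
    calc t₁ ^ (m + 1) * ((xa ^ (k + 1)) ^ (m + 1) * xa)
        = (t₁ * xa ^ (k + 1)) ^ (m + 1) * xa := by ring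
      _ = (ya ^ k * E) ^ (m + 1) * xa := by rw [hB]
      _ = (ya ^ k) ^ (m + 1) * (xa * E ^ (m + 1)) := by ring
      _ = (ya ^ k) ^ (m + 1) * (ya ^ m * D ^ (m + 1)) := by rw [hmain]
      _ = (ya ^ k) ^ (m + 1) * ya ^ m * D ^ (m + 1) := by ring
  refine ⟨key, ?_⟩
  rw [IsLocalization.eq_mk'_iff_mul_eq,
    ← map_mul (algebraMap (ForcingAlgebra19 x y z (m + 1) k) (Localization.Away xa)), key]
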